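/- arXiv:1511.04922 — 5 statements merged into one kernel-verified Lean document; each statement's English description precedes it below -/
import Mathlib

section
/- For every f ∈ L((Z)) the trace of f for the degree-q field extension L((Z))/φ_L(L((Z))) equals φ_L(ψ_Col(f)); equivalently, Tr_{L((Z))/φ_L(L((Z)))} = φ_L ∘ ψ_Col. -/
set_option synthInstance.maxHeartbeats 1000000
set_option maxHeartbeats 1000000

open PowerSeries

/-- The field `L((Z))` regarded as the base of the extension `L((Z))/φ_L(L((Z)))`, i.e. as an
algebra over itself via the Frobenius substitution `φ_L : f(Z) ↦ f([π_L](Z))`. -/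
def FrobeniusBase (L : Type*) [Field L] (φ : LaurentSeries L →+* LaurentSeries L) : Type _ :=
  LaurentSeries L

noncomputable instance (L : Type*) [Field L] (φ : LaurentSeries L →+* LaurentSeries L) :
    Field (FrobeniusBase L φ) :=
  inferInstanceAs (Field (LaurentSeries L))

noncomputable instance (L : Type*) [Field L] (φ : LaurentSeries L →+* LaurentSeries L) :
    Algebra (FrobeniusBase L φ) (LaurentSeries L) :=
  RingHom.toAlgebra (show FrobeniusBase L φ →+* LaurentSeries L from φ)

noncomputable instance (L : Type*) [Field L] (φ : LaurentSeries L →+* LaurentSeries L) :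
    Module (FrobeniusBase L φ) (LaurentSeries L) :=
  Algebra.toModule

/-!
The `q` substitutions `f(Z) ↦ f(a +_LT Z)`, `a ∈ LT_1`, extend to `q` distinct embeddings of
`L((Z))` into `K((Z))` that all agree on the subfield `φ_L(L((Z)))`, because `[π_L](a +_LT Z) =
[π_L](Z)`. As `L((Z))` has degree `q` over that subfield, the extension is separable and these are
all of its embeddings, so the trace is their sum. After clearing denominators by a power of
`[π_L](Z)`, the defining identity of `ψ_Col` says that this sum is `φ_L(ψ_Col(f))`.
-/

open scoped LaurentSeries

theorem PowerSeries.apply_X_eq_of_coeff_eq_sum {R : Type*} [CommRing R] {P : R⟦X⟧}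
    (hP : constantCoeff P = 0) {φ : R⟦X⟧ → R⟦X⟧}
    (hφ : ∀ f k, coeff k (φ f) = ∑ n ∈ Finset.range (k + 1), coeff n f * coeff k (P ^ n)) :
    φ X = P := by
  ext k
  rw [hφ, Finset.sum_eq_single 1 (fun n _ hn => by rw [coeff_X, if_neg hn, zero_mul])]
  · simp
  · intro h
    rcases k with _ | _
    · simpa using hP
    · simp at h

namespace LaurentSeries

variable {R K : Type*} [CommRing R] [Field K]

theorem isUnit_ofPowerSeries_comp_of_mem_powers_X (g : R⟦X⟧ →+* K⟦X⟧) (hg : g X ≠ 0)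
    (y : Submonoid.powers (X : R⟦X⟧)) :
    IsUnit ((HahnSeries.ofPowerSeries ℤ K).comp g y) := by
  obtain ⟨n, hn⟩ := y.2
  rw [← hn, map_pow]
  exact (isUnit_iff_ne_zero.2 fun h => hg (HahnSeries.ofPowerSeries_injective
    (h.trans (map_zero _).symm))).pow n

noncomputable def extendRingHom (g : R⟦X⟧ →+* K⟦X⟧) (hg : g X ≠ 0) : R⸨X⸩ →+* K⸨X⸩ :=
  IsLocalization.lift (M := Submonoid.powers X) (isUnit_ofPowerSeries_comp_of_mem_powers_X g hg)

@[simp]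
theorem extendRingHom_ofPowerSeries (g : R⟦X⟧ →+* K⟦X⟧) (hg : g X ≠ 0) (f : R⟦X⟧) :
    extendRingHom g hg (HahnSeries.ofPowerSeries ℤ R f) = HahnSeries.ofPowerSeries ℤ K (g f) :=
  IsLocalization.lift_eq (M := Submonoid.powers X) (isUnit_ofPowerSeries_comp_of_mem_powers_X g hg) f

theorem ringHom_ext {A : Type*} [Semiring A] {F G : R⸨X⸩ →+* A}
    (h : ∀ f : R⟦X⟧, F (HahnSeries.ofPowerSeries ℤ R f) = G (HahnSeries.ofPowerSeries ℤ R f)) :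
    F = G :=
  IsLocalization.ringHom_ext (Submonoid.powers X) (RingHom.ext h)

theorem extendRingHom_injective {g g' : R⟦X⟧ →+* K⟦X⟧} {hg : g X ≠ 0} {hg' : g' X ≠ 0}
    (h : extendRingHom g hg = extendRingHom g' hg') : g = g' :=
  RingHom.ext fun f => HahnSeries.ofPowerSeries_injective <| by
    simpa using RingHom.congr_fun h (HahnSeries.ofPowerSeries ℤ R f)

theorem exists_pow_mul_eq_ofPowerSeries {P : R⟦X⟧} (hP : X ∣ P) (f : R⸨X⸩) :
    ∃ (n : ℕ) (h : R⟦X⟧),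
      HahnSeries.ofPowerSeries ℤ R P ^ n * f = HahnSeries.ofPowerSeries ℤ R h := by
  obtain ⟨u, rfl⟩ := hP
  obtain ⟨⟨h, ⟨_, n, rfl⟩⟩, hf⟩ := IsLocalization.surj (Submonoid.powers (X : R⟦X⟧)) f
  refine ⟨n, u ^ n * h, ?_⟩
  simp only [LaurentSeries.coe_algebraMap] at hf
  rw [map_mul, map_mul, mul_pow, ← hf, map_pow, map_pow]
  ring

theorem extendRingHom_comp_eq_of_comp_eq {φ : R⸨X⸩ →+* R⸨X⸩} {φps : R⟦X⟧ →+* R⟦X⟧}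
    (hφ : ∀ f, φ (HahnSeries.ofPowerSeries ℤ R f) = HahnSeries.ofPowerSeries ℤ R (φps f))
    {g g' : R⟦X⟧ →+* K⟦X⟧} {hg : g X ≠ 0} {hg' : g' X ≠ 0} (h : ∀ f, g (φps f) = g' (φps f)) :
    (extendRingHom g hg).comp φ = (extendRingHom g' hg').comp φ :=
  ringHom_ext fun f => by simp [hφ, h]

end LaurentSeries

open Module in
theorem Algebra.algebraMap_trace_eq_sum_of_injective {F E Ω : Type*} [Field F] [Field E]
    [Field Ω] [Algebra F E] [Algebra F Ω] [FiniteDimensional F E] {ι : Type*} [Fintype ι]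
    (τ : ι → E →ₐ[F] Ω) (hτ : Function.Injective τ) (hcard : Fintype.card ι = finrank F E)
    (x : E) : algebraMap F Ω (trace F E x) = ∑ i, τ i x := by
  let ι' : Ω →ₐ[F] AlgebraicClosure Ω := IsScalarTower.toAlgHom F Ω _
  let τ' : ι → E →ₐ[F] AlgebraicClosure Ω := fun i => ι'.comp (τ i)
  have hτ' : Function.Injective τ' := fun i j h =>
    hτ (AlgHom.ext fun y => ι'.injective (AlgHom.congr_fun h y))
  have : Algebra.IsAlgebraic F E := .of_finite F E
  -- `[E : F]` distinct embeddings force `E / F` to be separable, and then they are all of them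
  have hsep : Field.finSepDegree F E = finrank F E := by
    refine le_antisymm (Field.finSepDegree_le_finrank F E) ?_
    rw [Field.finSepDegree_eq_of_isAlgClosed F E (AlgebraicClosure Ω), ← hcard,
      ← Nat.card_eq_fintype_card]
    exact Nat.card_le_card_of_injective τ' hτ'
  have : Algebra.IsSeparable F E := (Field.finSepDegree_eq_finrank_iff F E).1 hsep
  have hbij : Function.Bijective τ' := by
    refine (Fintype.bijective_iff_injective_and_card τ').2 ⟨hτ', ?_⟩
    rw [hcard, ← hsep, Field.finSepDegree_eq_of_isAlgClosed F E (AlgebraicClosure Ω),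
      Nat.card_eq_fintype_card]
  apply (algebraMap Ω (AlgebraicClosure Ω)).injective
  rw [map_sum, ← IsScalarTower.algebraMap_apply, trace_eq_sum_embeddings]
  exact (Fintype.sum_bijective τ' hbij _ _ fun _ => rfl).symm

theorem RingHom.apply_algebraMap_trace_eq_sum {F E Ω : Type*} [Field F] [Field E] [Field Ω]
    [Algebra F E] [FiniteDimensional F E] {ι : Type*} [Fintype ι] (j : E →+* Ω)
    (τ : ι → E →+* Ω) (hτ : ∀ i, (τ i).comp (algebraMap F E) = j.comp (algebraMap F E))
    (hτ_inj : Function.Injective τ) (hcard : Fintype.card ι = Module.finrank F E) (x : E) :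
    j (algebraMap F E (Algebra.trace F E x)) = ∑ i, τ i x := by
  let : Algebra F Ω := (j.comp (algebraMap F E)).toAlgebra
  exact Algebra.algebraMap_trace_eq_sum_of_injective
    (fun i => (⟨τ i, RingHom.congr_fun (hτ i)⟩ : E →ₐ[F] Ω))
    (fun i k h => hτ_inj (RingHom.ext (AlgHom.congr_fun h))) hcard x

namespace LaurentSeries

variable {L K : Type*} [Field L] [Field K] [Algebra L K]

theorem sum_extendRingHom_apply_eq_apply {ι : Type*} [Fintype ι] {Xπ : L⟦X⟧} (hXπ : X ∣ Xπ)
    {φps : L⟦X⟧ →+* L⟦X⟧} (hφX : φps X = Xπ) {φL : L⸨X⸩ →+* L⸨X⸩}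
    (hφL : ∀ f, φL (HahnSeries.ofPowerSeries ℤ L f) = HahnSeries.ofPowerSeries ℤ L (φps f))
    (σ : ι → L⟦X⟧ →+* K⟦X⟧) (hσX : ∀ i, σ i X ≠ 0)
    (hσφ : ∀ i f, σ i (φps f) = map (algebraMap L K) (φps f))
    {ψps : L⟦X⟧ → L⟦X⟧} (hψps : ∀ f, map (algebraMap L K) (φps (ψps f)) = ∑ i, σ i f)
    {ψL : L⸨X⸩ → L⸨X⸩}
    (hψL : ∀ (f : L⸨X⸩) (n : ℕ) (h : L⟦X⟧),
      HahnSeries.ofPowerSeries ℤ L Xπ ^ n * f = HahnSeries.ofPowerSeries ℤ L h →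
      ψL f = HahnSeries.single (-(n : ℤ)) 1 * HahnSeries.ofPowerSeries ℤ L (ψps h))
    (f : L⸨X⸩) :
    ∑ i, extendRingHom (σ i) (hσX i) f =
      extendRingHom (map (algebraMap L K)) (by simp) (φL (ψL f)) := by
  set j := extendRingHom (map (algebraMap L K)) (by simp)
  obtain ⟨n, h, hfh⟩ := exists_pow_mul_eq_ofPowerSeries hXπ f
  have hc : HahnSeries.ofPowerSeries ℤ L Xπ ^ n = φL (HahnSeries.single (n : ℤ) 1) := by
    rw [← HahnSeries.ofPowerSeries_X_pow, hφL, map_pow, hφX, map_pow]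
  set c : L⸨X⸩ := HahnSeries.single (n : ℤ) 1
  have hψ : c * ψL f = HahnSeries.ofPowerSeries ℤ L (ψps h) := by
    rw [hψL f n h hfh, ← mul_assoc, HahnSeries.single_mul_single, add_neg_cancel, one_mul,
      HahnSeries.single_zero_one, one_mul]
  have hτφ i : (extendRingHom (σ i) (hσX i)).comp φL = j.comp φL :=
    extendRingHom_comp_eq_of_comp_eq hφL (hσφ i)
  have hjc : j (φL c) ≠ 0 := by simp [c]
  refine mul_left_cancel₀ hjc ?_
  calc j (φL c) * ∑ i, extendRingHom (σ i) (hσX i) f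
      = ∑ i, extendRingHom (σ i) (hσX i) (φL c * f) := by
        simp only [Finset.mul_sum, map_mul, ← RingHom.comp_apply, hτφ]
    _ = HahnSeries.ofPowerSeries ℤ K (map (algebraMap L K) (φps (ψps h))) := by
        simp [← hc, hfh, hψps]
    _ = j (φL c) * j (φL (ψL f)) := by
        rw [← map_mul, ← map_mul, hψ, hφL, extendRingHom_ofPowerSeries]

end LaurentSeries

theorem statement4_trace_eq_phi_psi_general
    (L : Type*) [Field L]
    (π : L) (hπ0 : π ≠ 0)
    (q : ℕ)
    (Xπ : PowerSeries L)
    (hXπ0 : constantCoeff (R := L) Xπ = 0)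
    (hXπ1 : coeff (R := L) 1 Xπ = π)
    (φps : PowerSeries L →+* PowerSeries L)
    (hφps : ∀ f k, coeff (R := L) k (φps f) =
      ∑ n ∈ Finset.range (k + 1), coeff (R := L) n f * coeff (R := L) k (Xπ ^ n))
    (φL : LaurentSeries L →+* LaurentSeries L)
    (hφL : ∀ f : PowerSeries L,
      φL (HahnSeries.ofPowerSeries ℤ L f) = HahnSeries.ofPowerSeries ℤ L (φps f))
    -- `1, Z, …, Z^{q-1}` is a basis of `L((Z))` over `φ_L(L((Z)))`
    (B : Module.Basis (Fin q) (FrobeniusBase L φL) (LaurentSeries L))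
    -- the trace operator `ψ_Col`, via the torsion points of the Lubin-Tate group
    (K : Type*) [Field K] [Algebra L K]
    (LT1 : Finset K) (hLT1 : LT1.card = q)
    (σ : K → (PowerSeries L →+* PowerSeries K))
    (hσ0 : ∀ a ∈ LT1, constantCoeff (R := K) (σ a X) = a)
    (hσφ : ∀ a ∈ LT1, ∀ f, σ a (φps f) = PowerSeries.map (algebraMap L K) (φps f))
    (ψps : PowerSeries L →ₗ[L] PowerSeries L)
    (hψps : ∀ f, PowerSeries.map (algebraMap L K) (φps (ψps f)) = ∑ a ∈ LT1, σ a f)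
    (ψL : LaurentSeries L →ₗ[L] LaurentSeries L)
    (hψL : ∀ (f : LaurentSeries L) (n : ℕ) (h : PowerSeries L),
      (HahnSeries.ofPowerSeries ℤ L Xπ) ^ n * f = HahnSeries.ofPowerSeries ℤ L h →
      ψL f = HahnSeries.single (-(n : ℤ)) 1 * HahnSeries.ofPowerSeries ℤ L (ψps h)) :
    ∀ f : LaurentSeries L,
      algebraMap (FrobeniusBase L φL) (LaurentSeries L)
          (Algebra.trace (FrobeniusBase L φL) (LaurentSeries L) f) =
        φL (ψL f) := by
  intro f
  have hφX : φps X = Xπ := apply_X_eq_of_coeff_eq_sum hXπ0 hφps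
  have hXπ : X ∣ Xπ := X_dvd_iff.2 hXπ0
  have hσX : ∀ a ∈ LT1, σ a X ≠ 0 := by
    obtain ⟨u, hu⟩ := hXπ
    intro a ha hσa
    have : map (algebraMap L K) Xπ = 0 := by
      rw [← hφX, ← hσφ a ha, hφX, hu, map_mul, hσa, zero_mul]
    exact hπ0 (by simpa [hXπ1] using congrArg (coeff 1) this)
  let j := LaurentSeries.extendRingHom (map (algebraMap L K)) (by simp)
  let τ (a : LT1) := LaurentSeries.extendRingHom (σ a) (hσX a a.2)
  have hτ_inj : Function.Injective τ := fun a b hab => Subtype.ext <| by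
    rw [← hσ0 a a.2, ← hσ0 b b.2, LaurentSeries.extendRingHom_injective hab]
  have hτφ (a : LT1) : (τ a).comp (algebraMap (FrobeniusBase L φL) L⸨X⸩) =
      j.comp (algebraMap (FrobeniusBase L φL) L⸨X⸩) :=
    LaurentSeries.extendRingHom_comp_eq_of_comp_eq hφL (hσφ a a.2)
  have : FiniteDimensional (FrobeniusBase L φL) L⸨X⸩ := .of_basis B
  have hcard : Fintype.card LT1 = Module.finrank (FrobeniusBase L φL) L⸨X⸩ := by
    rw [Fintype.card_coe, hLT1, Module.finrank_eq_card_basis B, Fintype.card_fin]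
  apply j.injective
  rw [RingHom.apply_algebraMap_trace_eq_sum j τ hτφ hτ_inj hcard f]
  exact LaurentSeries.sum_extendRingHom_apply_eq_apply (ι := LT1) hXπ hφX hφL (σ ·) _
    (fun a => hσφ a a.2) (fun g => (hψps g).trans (Finset.sum_coe_sort LT1 _).symm) hψL f

/-- `L` is a finite extension of `ℚ_p` with ring of integers `𝒪 = o_L`, prime element `π` and
residue cardinality `q`; `Xπ = [π_L](Z)` is a Lubin-Tate series for `π`.  `φps`/`φL` denote
the substitution `f(Z) ↦ f([π_L](Z))` on `L[[Z]]` resp. on the Laurent series field `L((Z))`,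
so that `L((Z))` is a `q`-dimensional extension of the subfield `φ_L(L((Z)))` with basis
`1, Z, …, Z^{q-1}` (hypothesis `B`).  `ψps`/`ψL` is the Coleman trace operator `ψ_Col`
(characterised via the `q` torsion points `LT1 ⊆ K` and the substitutions
`σ a : f(Z) ↦ f(a +_LT Z)`, and extended to `L((Z))` by
`ψ_Col(f) = Z^{-n}·ψ_Col([π_L](Z)^n f)`).

Conclusion: for every `f ∈ L((Z))` the trace of `f` for the degree-`q` field extension
`L((Z))/φ_L(L((Z)))` equals `φ_L(ψ_Col(f))`; i.e. `Tr_{L((Z))/φ_L(L((Z)))} = φ_L ∘ ψ_Col`.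
(The base field is the copy `FrobeniusBase L φL` of `L((Z))` embedded by `φL`, so the
inclusion of the trace into `L((Z))` is `algebraMap = φL`.) -/
theorem statement4_trace_eq_phi_psi
    (L : Type*) [Field L]
    (𝒪 : Subring L) (π : L) (hπ0 : π ≠ 0) (hπ𝒪 : π ∈ 𝒪)
    (q : ℕ) (hq1 : 1 < q)
    (Xπ : PowerSeries L)
    (hXπ0 : constantCoeff (R := L) Xπ = 0)
    (hXπ1 : coeff (R := L) 1 Xπ = π)
    (hXπ𝒪 : ∀ n, coeff (R := L) n Xπ ∈ 𝒪)
    (hXπq : ∀ n, ∃ cc ∈ 𝒪, coeff (R := L) n (Xπ - X ^ q) = π * cc)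
    (φps : PowerSeries L →+* PowerSeries L)
    (hφps : ∀ f k, coeff (R := L) k (φps f) =
      ∑ n ∈ Finset.range (k + 1), coeff (R := L) n f * coeff (R := L) k (Xπ ^ n))
    (φL : LaurentSeries L →+* LaurentSeries L)
    (hφL : ∀ f : PowerSeries L,
      φL (HahnSeries.ofPowerSeries ℤ L f) = HahnSeries.ofPowerSeries ℤ L (φps f))
    -- `1, Z, …, Z^{q-1}` is a basis of `L((Z))` over `φ_L(L((Z)))`
    (B : Module.Basis (Fin q) (FrobeniusBase L φL) (LaurentSeries L))
    (hB : ∀ i : Fin q, B i = HahnSeries.single 1 1 ^ (i : ℕ))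
    -- the trace operator `ψ_Col`, via the torsion points of the Lubin-Tate group
    (K : Type*) [Field K] [Algebra L K]
    (LT1 : Finset K) (hLT1 : LT1.card = q)
    (σ : K → (PowerSeries L →+* PowerSeries K))
    (hσC : ∀ a ∈ LT1, ∀ r : L, σ a (C (R := L) r) = C (R := K) (algebraMap L K r))
    (hσ0 : ∀ a ∈ LT1, constantCoeff (R := K) (σ a X) = a)
    (hσφ : ∀ a ∈ LT1, ∀ f, σ a (φps f) = PowerSeries.map (algebraMap L K) (φps f))
    (ψps : PowerSeries L →ₗ[L] PowerSeries L)
    (hψps : ∀ f, PowerSeries.map (algebraMap L K) (φps (ψps f)) = ∑ a ∈ LT1, σ a f)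
    (ψL : LaurentSeries L →ₗ[L] LaurentSeries L)
    (hψL : ∀ (f : LaurentSeries L) (n : ℕ) (h : PowerSeries L),
      (HahnSeries.ofPowerSeries ℤ L Xπ) ^ n * f = HahnSeries.ofPowerSeries ℤ L h →
      ψL f = HahnSeries.single (-(n : ℤ)) 1 * HahnSeries.ofPowerSeries ℤ L (ψps h)) :
    ∀ f : LaurentSeries L,
      algebraMap (FrobeniusBase L φL) (LaurentSeries L)
          (Algebra.trace (FrobeniusBase L φL) (LaurentSeries L) f) =
        φL (ψL f) :=
  statement4_trace_eq_phi_psi_general L π hπ0 q Xπ hXπ0 hXπ1 φps hφps φL hφL B K LT1 hLT1 σ hσ0 hσφ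
    ψps hψps ψL hψL
end

section
/- Let R := o_L/π_L^n o_L. The map from R((Z)) to the R-module of continuous R-linear maps Hom_R^c(R((Z)), R) (compact-open topology, R discrete) sending g to ℓ_g(f) := Res(f·g) is an isomorphism of topological R-modules, i.e. it is bijective, continuous, and open. -/
/-!
The residue pairing recovers coefficients: `Res (Z^(-1-j) g) = g_j`, so `g ↦ ℓ_g` is injective.
A continuous linear functional `ℓ` has open kernel, hence kills some `Z^k R[[Z]]`; the series
`g` with `g_j = ℓ(Z^(-1-j))` is then bounded below, and `ℓ_g = ℓ` because both kill `Z^k R[[Z]]`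
and agree on monomials. Continuity comes from joint continuity of `(g, f) ↦ Res (f g)`. For
openness, `{0} ∪ {Z^m | m ≥ -k}` is compact because `Z^m → 0`, and functionals close to `ℓ_{g₀}`
in the compact-open topology agree with it there, which forces `g ≡ g₀` modulo `Z^k R[[Z]]`.
-/

open HahnSeries Filter Topology

lemma ContinuousMap.isOpen_setOf_eqOn {X S : Type*} [TopologicalSpace X] [TopologicalSpace S]
    [DiscreteTopology S] {K : Set X} (hK : IsCompact K) (l₀ : C(X, S)) :
    IsOpen {l : C(X, S) | Set.EqOn l l₀ K} := by
  have hfin : (l₀ '' K).Finite := (hK.image l₀.continuous).finite_of_discrete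
  have hfibres : {l : C(X, S) | Set.EqOn l l₀ K}
      = ⋂ r ∈ l₀ '' K, {l : C(X, S) | Set.MapsTo l (K ∩ l₀ ⁻¹' {r}) {r}} := by
    ext l
    simp only [Set.mem_ofPred_eq, Set.mem_iInter]
    constructor
    · rintro h r - f ⟨hfK, hfr⟩
      exact (h hfK).trans hfr
    · exact fun h f hf => h (l₀ f) ⟨f, hf, rfl⟩ ⟨hf, rfl⟩
  rw [hfibres]
  exact hfin.isOpen_biInter fun r _ => ContinuousMap.isOpen_setOfPred_mapsTo
    (hK.inter_right ((isClosed_discrete _).preimage l₀.continuous)) (isOpen_discrete _)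

namespace LaurentSeries

variable {R : Type*} [CommRing R]

variable (R) in
/-- The subgroup `Z^m R[[Z]]`. -/
def coeffZeroBelow (m : ℤ) : AddSubgroup (LaurentSeries R) where
  carrier := {f | ∀ i < m, f.coeff i = 0}
  zero_mem' _ _ := coeff_zero
  add_mem' ha hb i hi := by simp [ha i hi, hb i hi]
  neg_mem' ha i hi := by simp [ha i hi]

lemma mem_coeffZeroBelow_iff_le_orderTop {m : ℤ} {f : LaurentSeries R} :
    f ∈ coeffZeroBelow R m ↔ (m : WithTop ℤ) ≤ f.orderTop := by
  rw [le_orderTop_iff_forall]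
  exact forall_congr' fun i => by norm_cast

lemma coeffZeroBelow_antitone : Antitone (coeffZeroBelow R) :=
  fun _ _ h _ hf i hi => hf i (hi.trans_le h)

lemma mem_coeffZeroBelow_order (f : LaurentSeries R) : f ∈ coeffZeroBelow R f.order :=
  fun _ => coeff_eq_zero_of_lt_order

lemma mul_mem_coeffZeroBelow {a b : ℤ} {f g : LaurentSeries R} (hf : f ∈ coeffZeroBelow R a)
    (hg : g ∈ coeffZeroBelow R b) : f * g ∈ coeffZeroBelow R (a + b) := by
  rw [mem_coeffZeroBelow_iff_le_orderTop] at *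
  exact (WithTop.coe_add a b ▸ add_le_add hf hg).trans orderTop_add_le_mul

lemma single_mem_coeffZeroBelow {m i : ℤ} (h : m ≤ i) (r : R) :
    single i r ∈ coeffZeroBelow R m :=
  fun _ hj => coeff_single_of_ne (by omega)

lemma sub_single_mem_coeffZeroBelow_succ {m : ℤ} {f : LaurentSeries R}
    (hf : f ∈ coeffZeroBelow R m) : f - single m (f.coeff m) ∈ coeffZeroBelow R (m + 1) := by
  intro i hi
  rcases (Int.lt_add_one_iff.mp hi).lt_or_eq with hi | rfl
  · simp [hf i hi, coeff_single_of_ne hi.ne]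
  · simp

noncomputable def residuePairing (g : LaurentSeries R) : LaurentSeries R →ₗ[R] R where
  toFun f := (f * g).coeff (-1)
  map_add' _ _ := by rw [add_mul, coeff_add]
  map_smul' c f := by
    rw [← single_zero_mul_eq_smul, mul_assoc, single_zero_mul_eq_smul, coeff_smul,
      RingHom.id_apply]

lemma residuePairing_single (g : LaurentSeries R) (m : ℤ) (r : R) :
    residuePairing g (single m r) = r * g.coeff (-1 - m) := by
  show (single m r * g).coeff (-1) = _
  simpa using coeff_single_mul_add (r := r) (x := g) (a := -1 - m) (b := m)

lemma residuePairing_single_one (g : LaurentSeries R) (j : ℤ) :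
    residuePairing g (single (-1 - j) 1) = g.coeff j := by
  rw [residuePairing_single, one_mul, sub_sub_cancel]

lemma residuePairing_injective : Function.Injective (residuePairing (R := R)) := fun g g' h => by
  ext j
  rw [← residuePairing_single_one, h, residuePairing_single_one]

lemma residuePairing_eq_zero {k : ℤ} {g f : LaurentSeries R} (hg : g ∈ coeffZeroBelow R (-k))
    (hf : f ∈ coeffZeroBelow R k) : residuePairing g f = 0 :=
  mul_mem_coeffZeroBelow hf hg (-1) (by omega)

lemma linearMap_ext_of_coeffZeroBelow {M : Type*} [AddCommGroup M] [Module R M]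
    {D D' : LaurentSeries R →ₗ[R] M} {k : ℤ} (hV : ∀ f ∈ coeffZeroBelow R k, D f = D' f)
    (hs : ∀ m, D (single m 1) = D' (single m 1)) : D = D' := by
  rw [← sub_eq_zero]
  set E := D - D'
  have hsingle (m : ℤ) (r : R) : E (single m r) = 0 := by
    rw [show single m r = r • single m (1 : R) by ext; simp [coeff_single]]
    simp [E, hs]
  -- Descending induction: below `k`, peel off the lowest monomial of `f`.
  have hdesc (t : ℕ) : ∀ f ∈ coeffZeroBelow R (k - t), E f = 0 := by
    induction t with
    | zero => simpa [E, sub_eq_zero] using hV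
    | succ t ih =>
      intro f hf
      have hrest := ih _ (by
        simpa [sub_add_eq_sub_sub] using sub_single_mem_coeffZeroBelow_succ hf)
      rwa [map_sub, hsingle, sub_zero] at hrest
  ext f
  exact hdesc (k - f.order).toNat f
    (coeffZeroBelow_antitone (by omega) (mem_coeffZeroBelow_order f))

lemma exists_residuePairing_eq {l : LaurentSeries R →ₗ[R] R} {k : ℤ}
    (hl : ∀ f ∈ coeffZeroBelow R k, l f = 0) : ∃ g, residuePairing g = l := by
  have hbdd : BddBelow (Function.support fun j => l (single (-1 - j) 1)) := by
    refine ⟨-k, fun j hj => not_lt.mp fun hjk => hj (hl _ (single_mem_coeffZeroBelow ?_ _))⟩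
    omega
  refine ⟨ofSuppBddBelow _ hbdd, linearMap_ext_of_coeffZeroBelow (k := k) (fun f hf => ?_)
    fun m => ?_⟩
  · rw [hl f hf]
    refine residuePairing_eq_zero (fun j hj => ?_) hf
    simp only [coeff_ofSuppBddBelow]
    exact hl _ (single_mem_coeffZeroBelow (by omega) _)
  · rw [residuePairing_single, coeff_ofSuppBddBelow, one_mul, sub_sub_cancel]

lemma sub_mem_coeffZeroBelow_of_residuePairing_single_eq {k : ℤ} {g g₀ : LaurentSeries R}
    (h : ∀ m : ℕ, residuePairing g (single (-k + m) 1) = residuePairing g₀ (single (-k + m) 1)) :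
    g - g₀ ∈ coeffZeroBelow R k := by
  intro j hj
  have hj' := h (k - 1 - j).toNat
  rw [show -k + ((k - 1 - j).toNat : ℤ) = -1 - j by omega, residuePairing_single_one,
    residuePairing_single_one] at hj'
  rw [coeff_sub, hj', sub_self]

section Topology

variable [TopologicalSpace (LaurentSeries R)]

variable (R) in
def HasCoeffZeroBelowNhdsBasis : Prop :=
  (𝓝 (0 : LaurentSeries R)).HasBasis (fun _ : ℕ => True)
    fun k => (coeffZeroBelow R k : Set (LaurentSeries R))

lemma coeffZeroBelow_mem_nhds (hbasis : HasCoeffZeroBelowNhdsBasis R) (m : ℤ) :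
    (coeffZeroBelow R m : Set (LaurentSeries R)) ∈ 𝓝 0 :=
  mem_of_superset (hbasis.mem_of_mem (i := m.toNat) trivial)
    (coeffZeroBelow_antitone (Int.self_le_toNat m))

lemma tendsto_single_atTop_nhds_zero (hbasis : HasCoeffZeroBelowNhdsBasis R) (a : ℤ) (r : R) :
    Tendsto (fun m : ℕ => single (a + m) r) atTop (𝓝 0) := by
  refine hbasis.tendsto_right_iff.2 fun k _ => ?_
  filter_upwards [eventually_ge_atTop (k - a).toNat] with m hm
  exact single_mem_coeffZeroBelow (by omega) r

variable [TopologicalSpace R] [DiscreteTopology R]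

lemma continuous_coeff [IsTopologicalAddGroup (LaurentSeries R)]
    (hbasis : HasCoeffZeroBelowNhdsBasis R) (i : ℤ) :
    Continuous fun f : LaurentSeries R => f.coeff i := by
  refine continuous_of_continuousAt_zero (coeff.addMonoidHom i) ?_
  rw [ContinuousAt, nhds_discrete R, tendsto_pure]
  filter_upwards [coeffZeroBelow_mem_nhds hbasis (i + 1)] with f hf
  exact hf i (lt_add_one i)

lemma continuous_residuePairing_uncurry [IsTopologicalRing (LaurentSeries R)]
    (hbasis : HasCoeffZeroBelowNhdsBasis R) :
    Continuous fun p : LaurentSeries R × LaurentSeries R => residuePairing p.1 p.2 :=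
  (continuous_coeff hbasis (-1)).comp (continuous_snd.mul continuous_fst)

lemma exists_coeffZeroBelow_le_ker (hbasis : HasCoeffZeroBelowNhdsBasis R)
    {l : LaurentSeries R →ₗ[R] R} (hl : Continuous l) :
    ∃ k : ℤ, ∀ f ∈ coeffZeroBelow R k, l f = 0 := by
  have hker : l ⁻¹' {0} ∈ 𝓝 0 := hl.continuousAt.preimage_mem_nhds (by simp)
  obtain ⟨k, -, hk⟩ := hbasis.mem_iff.mp hker
  exact ⟨k, fun f hf => hk hf⟩

lemma isOpenMap_of_residuePairing [IsTopologicalAddGroup (LaurentSeries R)]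
    (hbasis : HasCoeffZeroBelowNhdsBasis R)
    {Λ : LaurentSeries R → {l : C(LaurentSeries R, R) // IsLinearMap R l}}
    (hΛ : ∀ g f, (Λ g : C(LaurentSeries R, R)) f = residuePairing g f)
    (hsurj : Function.Surjective Λ) : IsOpenMap Λ := by
  refine IsOpenMap.of_nhds_le fun g₀ s hs => ?_
  rw [mem_map, ← map_add_left_nhds_zero, mem_map] at hs
  obtain ⟨k, -, hk⟩ := hbasis.mem_iff.mp hs
  set K := insert 0 (Set.range fun m : ℕ => (single (-(k : ℤ) + m) 1 : LaurentSeries R))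
  have hK : IsCompact K := (tendsto_single_atTop_nhds_zero hbasis _ 1).isCompact_insert_range
  have hW : IsOpen {l : {l : C(LaurentSeries R, R) // IsLinearMap R l} |
      Set.EqOn l.1 (Λ g₀).1 K} :=
    (ContinuousMap.isOpen_setOf_eqOn hK _).preimage continuous_subtype_val
  refine mem_of_superset (hW.mem_nhds fun _ _ => rfl) fun l hl => ?_
  obtain ⟨g, rfl⟩ := hsurj l
  have hsub : g - g₀ ∈ coeffZeroBelow R k :=
    sub_mem_coeffZeroBelow_of_residuePairing_single_eq fun m => by
      simpa only [hΛ] using hl (Set.mem_insert_of_mem _ ⟨m, rfl⟩)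
  simpa using hk hsub

end Topology

end LaurentSeries

theorem statement7_residue_duality_general
    (R : Type*) [CommRing R]
    [TopologicalSpace R] [DiscreteTopology R]
    [TopologicalSpace (LaurentSeries R)] [IsTopologicalRing (LaurentSeries R)]
    (hbasis : (nhds (0 : LaurentSeries R)).HasBasis (fun _ : ℕ => True)
      (fun k => {f : LaurentSeries R | ∀ i : ℤ, i < (k : ℤ) → f.coeff i = 0})) :
    ∃ Φ : LaurentSeries R ≃ {l : C(LaurentSeries R, R) // IsLinearMap R ⇑l},
      (∀ g f : LaurentSeries R, ((Φ g : C(LaurentSeries R, R)) f) = (f * g).coeff (-1))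
        ∧ Continuous (fun g => Φ g)
        ∧ IsOpenMap (fun g => Φ g) := by
  let pairing : C(LaurentSeries R × LaurentSeries R, R) :=
    ⟨_, LaurentSeries.continuous_residuePairing_uncurry hbasis⟩
  let Λ : LaurentSeries R → {l : C(LaurentSeries R, R) // IsLinearMap R l} := fun g =>
    ⟨pairing.curry g, (LaurentSeries.residuePairing g).isLinear⟩
  have hinj : Function.Injective Λ := fun g g' h =>
    LaurentSeries.residuePairing_injective (LinearMap.ext fun f => congrArg (fun l => l.1 f) h)
  have hsurj : Function.Surjective Λ := by
    rintro ⟨l, hl⟩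
    obtain ⟨k, hk⟩ :=
      LaurentSeries.exists_coeffZeroBelow_le_ker hbasis (l := hl.mk' l) l.continuous
    obtain ⟨g, hg⟩ := LaurentSeries.exists_residuePairing_eq hk
    exact ⟨g, Subtype.ext (ContinuousMap.ext fun f => LinearMap.congr_fun hg f)⟩
  exact ⟨Equiv.ofBijective Λ ⟨hinj, hsurj⟩, fun _ _ => rfl, pairing.curry.continuous.subtype_mk _,
    LaurentSeries.isOpenMap_of_residuePairing hbasis (fun _ _ => rfl) hsurj⟩

/-- `O = o_L` is the ring of integers of a finite extension `L` of `ℚ_p` with prime element `π`,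
`n ≥ 1`, and `R := o_L/π^n o_L` (modelled as a discrete commutative ring `R` with a surjection
`o_L → R` of kernel `(π^n)`).  The Laurent series ring `R((Z))` carries the topology in which
`R` is discrete and the subgroups `Z^k R[[Z]]` (`k ≥ 0`) form a fundamental system of open
neighbourhoods of `0` (hypotheses `[TopologicalRing]` and `hbasis`); with this topology it is
a complete Hausdorff topological ring.  `Res : R((Z)) → R` is the residue map
`Σ aᵢ Zⁱ ↦ a_{-1}`, formalised as `·.coeff (-1)`.

Conclusion: the map sending `g ∈ R((Z))` to the functional `ℓ_g : f ↦ Res(f·g)` is an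
isomorphism of topological `R`-modules from `R((Z))` onto the module `Hom_R^c(R((Z)), R)` of
continuous `R`-linear maps with the compact-open topology: it is bijective (the equivalence
`Φ`), given by the residue pairing, continuous, and open. -/
theorem statement7_residue_duality
    (O : Type*) [CommRing O] [IsDomain O] [IsDiscreteValuationRing O]
    (π : O) (hπ : Irreducible π) [IsAdicComplete (Ideal.span {π}) O]
    (n : ℕ) (hn : 1 ≤ n)
    (R : Type*) [CommRing R] [Algebra O R]
    (hRsurj : Function.Surjective (algebraMap O R))
    (hRker : RingHom.ker (algebraMap O R) = Ideal.span {π ^ n})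
    [TopologicalSpace R] [DiscreteTopology R]
    [TopologicalSpace (LaurentSeries R)] [IsTopologicalRing (LaurentSeries R)]
    (hbasis : (nhds (0 : LaurentSeries R)).HasBasis (fun _ : ℕ => True)
      (fun k => {f : LaurentSeries R | ∀ i : ℤ, i < (k : ℤ) → f.coeff i = 0})) :
    ∃ Φ : LaurentSeries R ≃ {l : C(LaurentSeries R, R) // IsLinearMap R ⇑l},
      (∀ g f : LaurentSeries R, ((Φ g : C(LaurentSeries R, R)) f) = (f * g).coeff (-1))
        ∧ Continuous (fun g => Φ g)
        ∧ IsOpenMap (fun g => Φ g) :=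
  statement7_residue_duality_general R hbasis
end

section
/- Let A be a topological commutative ring, α : A → A a continuous ring homomorphism, and M a finitely generated A-module equipped with its module (quotient) topology, i.e. the quotient topology under any A-linear surjection A^d ↠ M. Then every additive map β : M → M which is α-semilinear, meaning β(f·m) = α(f)·β(m) for all f ∈ A and m ∈ M, is continuous. -/
theorem IsModuleTopology.of_eq_coinduced {R : Type*} [Ring R] [TopologicalSpace R]
    {P : Type*} [AddCommGroup P] [Module R P] [TopologicalSpace P] [IsModuleTopology R P]
    {M : Type*} [AddCommGroup M] [Module R M] [τM : TopologicalSpace M]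
    {π : P →ₗ[R] M} (hπ : Function.Surjective π)
    (hτM : τM = TopologicalSpace.coinduced π inferInstance) :
    IsModuleTopology R M :=
  ⟨hτM.trans (ModuleTopology.eq_coinduced_of_surjective hπ).symm⟩

theorem AddMonoidHom.continuous_of_map_smul {R S : Type*} [Ring R] [Ring S]
    [TopologicalSpace R] [TopologicalSpace S] {σ : R →+* S} (hσ : Continuous σ)
    {M : Type*} [AddCommGroup M] [Module R M] [TopologicalSpace M] [IsModuleTopology R M]
    {N : Type*} [AddCommGroup N] [Module S N] [TopologicalSpace N]
    [ContinuousAdd N] [ContinuousSMul S N]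
    (β : M →+ N) (hβ : ∀ (f : R) (m : M), β (f • m) = σ f • β m) :
    Continuous β :=
  IsModuleTopology.continuous_of_linearMapₛₗ hσ { β with map_smul' := hβ }

theorem statement9_semilinear_continuous_general
    (A : Type*) [CommRing A] [TopologicalSpace A] [IsTopologicalRing A]
    (α : A →+* A) (hα : Continuous α)
    (M : Type*) [AddCommGroup M] [Module A M] [TopologicalSpace M]
    (d : ℕ) (pr : (Fin d → A) →ₗ[A] M) (hpr : Function.Surjective pr)
    (htop : (inferInstance : TopologicalSpace M) =
      TopologicalSpace.coinduced pr (inferInstance : TopologicalSpace (Fin d → A)))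
    (β : M →+ M) (hβ : ∀ (f : A) (m : M), β (f • m) = α f • β m) :
    Continuous β := by
  have : IsModuleTopology A M := .of_eq_coinduced hpr htop
  have : ContinuousAdd M := IsModuleTopology.toContinuousAdd A M
  exact β.continuous_of_map_smul hα hβ

/-- Let `A` be a topological commutative ring, `α : A → A` a continuous ring homomorphism, and
`M` a finitely generated `A`-module equipped with its module (quotient) topology, i.e. the
quotient topology under an `A`-linear surjection `pr : A^d ↠ M` (this topology is independent
of the chosen surjection).  Then every additive map `β : M → M` which is `α`-semilinear,
meaning `β (f • m) = α f • β m` for all `f ∈ A`, `m ∈ M`, is continuous. -/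
theorem statement9_semilinear_continuous
    (A : Type*) [CommRing A] [TopologicalSpace A] [IsTopologicalRing A]
    (α : A →+* A) (hα : Continuous α)
    (M : Type*) [AddCommGroup M] [Module A M] [TopologicalSpace M]
    [Module.Finite A M]
    (d : ℕ) (pr : (Fin d → A) →ₗ[A] M) (hpr : Function.Surjective pr)
    (htop : (inferInstance : TopologicalSpace M) =
      TopologicalSpace.coinduced pr (inferInstance : TopologicalSpace (Fin d → A)))
    (β : M →+ M) (hβ : ∀ (f : A) (m : M), β (f • m) = α f • β m) :
    Continuous β :=
  statement9_semilinear_continuous_general A α hα M d pr hpr htop β hβ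
end

section
/- Let R := o_L/π_L^n o_L and let (M, φ_M) be an etale φ-module over R((Z)). Then the map φ_M − 1 : M → M is an open map for the weak topology; in particular it is topologically strict (the quotient topology of M/ker(φ_M − 1) agrees with the subspace topology of the image). -/
set_option synthInstance.maxHeartbeats 1000000
set_option maxHeartbeats 1000000

/-- `M` with the `A`-action twisted through the ring endomorphism `φ`. -/
def TwMod {A : Type*} [CommRing A] (φ : A →+* A) (M : Type*) := M

instance {A : Type*} [CommRing A] (φ : A →+* A) (M : Type*) [AddCommGroup M] :
    AddCommGroup (TwMod φ M) := inferInstanceAs (AddCommGroup M)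

instance {A : Type*} [CommRing A] (φ : A →+* A) (M : Type*) [AddCommGroup M]
    [Module A M] : Module A (TwMod φ M) := Module.compHom M φ

/-- The linearization `A ⊗_{A,φ} M → M`, `f ⊗ m ↦ f·φM(m)`, of a `φ`-semilinear map `φM`
(the first tensor factor carries the `A`-action twisted by `φ`, so the relation
`φ(a)·f ⊗ m = f ⊗ a·m` holds; the target carries the twisted action, making the map
`A`-linear).  An étale `φ`-module is one for which this map is bijective. -/
noncomputable def frobLinearization {A : Type*} [CommRing A] (φ : A →+* A)
    {M : Type*} [AddCommGroup M] [Module A M]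
    (φM : M →+ M) (hφM : ∀ (a : A) (m : M), φM (a • m) = φ a • φM m) :
    TensorProduct A (TwMod φ A) M →ₗ[A] TwMod φ M :=
  TensorProduct.lift
    { toFun := fun f =>
        { toFun := fun m => (show M from (show A from f) • φM m)
          map_add' := fun x y => by
            show (show A from f) • φM (x + y) = (show A from f) • φM x + (show A from f) • φM y
            rw [map_add, smul_add]
          map_smul' := fun a m => by
            show (show A from f) • φM (a • m) = φ a • ((show A from f) • φM m)
            rw [hφM a m, smul_comm] }
      map_add' := fun f g => LinearMap.ext fun m => by
        show ((show A from f) + (show A from g)) • φM m =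
          (show A from f) • φM m + (show A from g) • φM m
        rw [add_smul]
      map_smul' := fun a f => LinearMap.ext fun m => by
        show (φ a * (show A from f)) • φM m = φ a • ((show A from f) • φM m)
        rw [mul_smul] }

/-! The substitution `f(Z) ↦ f([π](Z))` multiplies vanishing orders in `R((Z))` by `q` up to a
bounded loss, since `[π](Z) ≡ Z^q` modulo `π` and `π^n = 0` in `R`. Hence a `φ`-semilinear lift
`Ψ` of `φ_M` along `pr : R((Z))^d ↠ M` maps `Z^k R[[Z]]^d` into `Z^(k+1) R[[Z]]^d` for large `k`,
and `1 - Ψ` maps `Z^k R[[Z]]^d` onto itself. So `φ_M - 1` maps `pr(Z^k R[[Z]]^d)` onto a superset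
of itself; these sets are open and form a basis of neighbourhoods of `0` in `M`. -/

open HahnSeries

theorem PowerSeries.X_pow_dvd_pow_X_pow_add_C_mul {R : Type*} [CommRing R] {π : R} {n : ℕ}
    (hπ : π ^ n = 0) (q m : ℕ) (g : PowerSeries R) :
    X ^ (q * (m + 1 - n)) ∣ (X ^ q + C π * g) ^ m := by
  rw [add_pow]
  refine Finset.dvd_sum fun l hl => ?_
  rcases le_or_gt n (m - l) with hnl | hnl
  · rw [mul_pow, ← map_pow, pow_eq_zero_of_le hnl hπ, map_zero, zero_mul, mul_zero, zero_mul]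
    exact dvd_zero _
  · rw [Finset.mem_range] at hl
    refine dvd_mul_of_dvd_left (dvd_mul_of_dvd_left ?_ _) _
    rw [← pow_mul]
    exact pow_dvd_pow _ (Nat.mul_le_mul_left _ (by omega))

/-- The solution is the geometric series `x = ∑ₘ Ψ^[m] w`. -/
theorem exists_sub_map_eq_of_contracting {G : Type*} [AddCommGroup G] {W : ℕ → AddSubgroup G}
    (hW : Antitone W) (hsep : ∀ x, (∀ N, x ∈ W N) → x = 0)
    (hcomplete : ∀ s : ℕ → G, (∀ N, s (N + 1) - s N ∈ W N) → ∃ x, ∀ N, x - s N ∈ W N)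
    {Ψ : G →+ G} {k₀ : ℕ} (hΨ : ∀ k ≥ k₀, ∀ x ∈ W k, Ψ x ∈ W (k + 1))
    {k : ℕ} (hk : k₀ ≤ k) {w : G} (hw : w ∈ W k) : ∃ x ∈ W k, x - Ψ x = w := by
  have hiter : ∀ m, Ψ^[m] w ∈ W (k + m) := by
    intro m
    induction m with
    | zero => exact hw
    | succ m ih =>
      rw [Function.iterate_succ_apply']
      exact hΨ (k + m) (by omega) _ ih
  set s : ℕ → G := fun N => ∑ m ∈ Finset.range N, Ψ^[m] w
  have hs_mem : ∀ N, s N ∈ W k :=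
    fun N => AddSubgroup.sum_mem _ fun m _ => hW (by omega) (hiter m)
  have htel : ∀ N, s N - Ψ (s N) = w - Ψ^[N] w := by
    intro N
    simp only [s, map_sum, ← Function.iterate_succ_apply' Ψ, ← Finset.sum_sub_distrib]
    exact Finset.sum_range_sub' (fun m => Ψ^[m] w) N
  obtain ⟨x, hx⟩ := hcomplete s fun N => by
    simpa [s, Finset.sum_range_succ] using hW (by omega) (hiter N)
  refine ⟨x, by simpa using add_mem (hx k) (hs_mem k),
    sub_eq_zero.1 (hsep _ fun N => hW (Nat.le_add_right N k₀) ?_)⟩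
  have hdecomp : x - Ψ x - w = (x - s (N + k₀)) - Ψ (x - s (N + k₀)) - Ψ^[N + k₀] w := by
    have h := sub_eq_zero.2 (htel (N + k₀))
    rw [map_sub, ← sub_eq_zero, ← h]
    abel
  rw [hdecomp]
  exact sub_mem (sub_mem (hx _) (hW (by omega) (hΨ _ (by omega) _ (hx _))))
    (hW (by omega) (hiter _))

theorem LinearMap.map_sum_smul_of_map_single {A M ι : Type*} [CommRing A] [Fintype ι]
    [DecidableEq ι] [AddCommGroup M] [Module A M] {φ : A →+* A} {φM : M →+ M}
    (hφM : ∀ (a : A) (m : M), φM (a • m) = φ a • φM m) (pr : (ι → A) →ₗ[A] M)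
    {y : ι → ι → A} (hy : ∀ j, pr (y j) = φM (pr (Pi.single j 1))) (x : ι → A) :
    pr (∑ j, φ (x j) • y j) = φM (pr x) := by
  conv_rhs => rw [pi_eq_sum_univ' x]
  simp only [map_sum, map_smul, hy, hφM]

namespace LaurentSeries

variable {R : Type*} [CommRing R]

variable (R) in
/-- `Z^k R[[Z]]` inside `R((Z))`. -/
def vanishingBelow (k : ℤ) : AddSubgroup (LaurentSeries R) where
  carrier := {x | ∀ i < k, x.coeff i = 0}
  zero_mem' _ _ := rfl
  add_mem' ha hb i hi := by rw [coeff_add, ha i hi, hb i hi, add_zero]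
  neg_mem' ha i hi := by rw [coeff_neg, ha i hi, neg_zero]

theorem vanishingBelow_antitone : Antitone (vanishingBelow R) :=
  fun _ _ hab _ hx i hi => hx i (hi.trans_le hab)

theorem mem_vanishingBelow_order (x : LaurentSeries R) : x ∈ vanishingBelow R x.order :=
  fun _ hi => coeff_eq_zero_of_lt_order hi

theorem mul_mem_vanishingBelow {a b : ℤ} {x y : LaurentSeries R} (hx : x ∈ vanishingBelow R a)
    (hy : y ∈ vanishingBelow R b) : x * y ∈ vanishingBelow R (a + b) := by
  intro i hi
  rw [coeff_mul]
  refine Finset.sum_eq_zero fun ij hij => ?_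
  rw [Finset.mem_antidiagonal] at hij
  rcases lt_or_ge ij.1 a with h | h
  · rw [hx _ h, zero_mul]
  · rw [hy _ (by omega), mul_zero]

theorem eq_zero_of_forall_mem_vanishingBelow {x : LaurentSeries R}
    (hx : ∀ N : ℕ, x ∈ vanishingBelow R N) : x = 0 := by
  ext i
  exact hx (i.toNat + 1) i (by omega)

theorem coeff_eq_of_sub_mem_vanishingBelow {s : ℕ → LaurentSeries R}
    (hs : ∀ N : ℕ, s (N + 1) - s N ∈ vanishingBelow R N) {N N' : ℕ} {i : ℤ} (hN : i < N)
    (hN' : i < N') : (s N').coeff i = (s N).coeff i := by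
  wlog hle : N ≤ N' generalizing N N'
  · exact (this hN' hN (by omega)).symm
  induction N', hle using Nat.le_induction with
  | base => rfl
  | succ N' hle ih =>
    have := hs N' i (by omega)
    rw [coeff_sub, sub_eq_zero] at this
    rw [this, ih (by omega)]

theorem exists_sub_mem_vanishingBelow {s : ℕ → LaurentSeries R}
    (hs : ∀ N : ℕ, s (N + 1) - s N ∈ vanishingBelow R N) :
    ∃ x, ∀ N : ℕ, x - s N ∈ vanishingBelow R N := by
  set x := s 0 + ofPowerSeries ℤ R (PowerSeries.mk fun m => (s (m + 1) - s 0).coeff m)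
  have hx : ∀ i, x.coeff i = (s (i.toNat + 1)).coeff i := by
    intro i
    rw [coeff_add, PowerSeries.coeff_coe]
    split_ifs with hi
    · rw [add_zero]
      exact (coeff_eq_of_sub_mem_vanishingBelow hs (N := 0) (by omega) (by omega)).symm
    · obtain ⟨m, rfl⟩ := Int.eq_ofNat_of_zero_le (not_lt.1 hi)
      rw [PowerSeries.coeff_mk, coeff_sub, Int.natAbs_natCast, Int.toNat_natCast, add_sub_cancel]
  refine ⟨x, fun N i hi => ?_⟩
  rw [coeff_sub, hx, coeff_eq_of_sub_mem_vanishingBelow hs hi (by omega), sub_self]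

theorem exists_ofPowerSeries_eq {x : LaurentSeries R} (hx : x ∈ vanishingBelow R 0) :
    ∃ f : PowerSeries R, ofPowerSeries ℤ R f = x := by
  refine ⟨PowerSeries.mk fun m => x.coeff m, ?_⟩
  ext i
  rw [PowerSeries.coeff_coe]
  split_ifs with hi
  · exact (hx i hi).symm
  · rw [PowerSeries.coeff_mk, show ((i.natAbs : ℕ) : ℤ) = i by omega]

/-- `hφ` says that `φ` is the substitution `f(X) ↦ f(F(X))`. -/
theorem map_mem_vanishingBelow {φ : LaurentSeries R →+* LaurentSeries R} {F : PowerSeries R}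
    (hφ : ∀ f : PowerSeries R, φ (ofPowerSeries ℤ R f) = ofPowerSeries ℤ R
      (PowerSeries.mk fun k => ∑ m ∈ Finset.range (k + 1),
        PowerSeries.coeff m f * PowerSeries.coeff k (F ^ m)))
    {e : ℕ → ℕ} (he : Monotone e) (hF : ∀ m, PowerSeries.X ^ e m ∣ F ^ m)
    {k : ℕ} {x : LaurentSeries R} (hx : x ∈ vanishingBelow R k) :
    φ x ∈ vanishingBelow R (e k) := by
  obtain ⟨f, rfl⟩ := exists_ofPowerSeries_eq (vanishingBelow_antitone (Int.natCast_nonneg k) hx)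
  intro i hi
  rw [hφ, PowerSeries.coeff_coe]
  split_ifs with hi0
  · rfl
  rw [PowerSeries.coeff_mk]
  refine Finset.sum_eq_zero fun m _ => ?_
  rcases lt_or_ge m k with hmk | hmk
  · rw [← coeff_coe_powerSeries, hx m (by omega), zero_mul]
  · rw [PowerSeries.X_pow_dvd_iff.1 (hF m) _ (by have := he hmk; omega), mul_zero]

variable {ι : Type*}

theorem exists_forall_mem_vanishingBelow [Finite ι] (x : ι → LaurentSeries R) :
    ∃ c : ℕ, ∀ i, x i ∈ vanishingBelow R (-c) := by
  obtain ⟨c, hc⟩ := Finite.exists_le fun i => (-(x i).order).toNat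
  exact ⟨c, fun i => vanishingBelow_antitone (by have := hc i; omega) (mem_vanishingBelow_order _)⟩

variable (R ι) in
def vanishingBelowPi (k : ℤ) : AddSubgroup (ι → LaurentSeries R) :=
  AddSubgroup.pi Set.univ fun _ => vanishingBelow R k

theorem mem_vanishingBelowPi {k : ℤ} {x : ι → LaurentSeries R} :
    x ∈ vanishingBelowPi R ι k ↔ ∀ i, x i ∈ vanishingBelow R k := by
  simp [vanishingBelowPi, AddSubgroup.mem_pi]

theorem vanishingBelowPi_antitone : Antitone (vanishingBelowPi R ι) :=
  fun _ _ hab _ hx => mem_vanishingBelowPi.2 fun i => vanishingBelow_antitone hab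
    (mem_vanishingBelowPi.1 hx i)

theorem eq_zero_of_forall_mem_vanishingBelowPi {x : ι → LaurentSeries R}
    (hx : ∀ N : ℕ, x ∈ vanishingBelowPi R ι N) : x = 0 :=
  funext fun i => eq_zero_of_forall_mem_vanishingBelow fun N => mem_vanishingBelowPi.1 (hx N) i

theorem exists_sub_mem_vanishingBelowPi {s : ℕ → ι → LaurentSeries R}
    (hs : ∀ N : ℕ, s (N + 1) - s N ∈ vanishingBelowPi R ι N) :
    ∃ x, ∀ N : ℕ, x - s N ∈ vanishingBelowPi R ι N := by
  choose x hx using fun i =>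
    exists_sub_mem_vanishingBelow (s := fun N => s N i) fun N => mem_vanishingBelowPi.1 (hs N) i
  exact ⟨x, fun N => mem_vanishingBelowPi.2 fun i => hx i N⟩

theorem sum_map_smul_mem_vanishingBelowPi [Fintype ι] {φ : LaurentSeries R →+* LaurentSeries R}
    {k l c : ℤ} (hφ : ∀ x ∈ vanishingBelow R k, φ x ∈ vanishingBelow R l)
    {y : ι → ι → LaurentSeries R} (hy : ∀ j, y j ∈ vanishingBelowPi R ι c)
    {x : ι → LaurentSeries R} (hx : x ∈ vanishingBelowPi R ι k) :
    ∑ j, φ (x j) • y j ∈ vanishingBelowPi R ι (l + c) := by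
  refine mem_vanishingBelowPi.2 fun i => ?_
  rw [Finset.sum_apply]
  exact AddSubgroup.sum_mem _ fun j _ => mul_mem_vanishingBelow
    (hφ _ (mem_vanishingBelowPi.1 hx j)) (mem_vanishingBelowPi.1 (hy j) i)

theorem exists_image_vanishingBelowPi_subset [Fintype ι]
    {φ : LaurentSeries R →+* LaurentSeries R} {q n : ℕ} (hq : 1 < q)
    (hφ : ∀ k : ℕ, ∀ x ∈ vanishingBelow R k, φ x ∈ vanishingBelow R (q * (k + 1 - n) : ℕ))
    {M : Type*} [AddCommGroup M] [Module (LaurentSeries R) M] {φM : M →+ M}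
    (hφM : ∀ (a : LaurentSeries R) (m : M), φM (a • m) = φ a • φM m)
    {pr : (ι → LaurentSeries R) →ₗ[LaurentSeries R] M} (hpr : Function.Surjective pr) :
    ∃ k₀ : ℕ, ∀ k ≥ k₀, pr '' vanishingBelowPi R ι k ⊆
      (φM - AddMonoidHom.id M) '' (pr '' vanishingBelowPi R ι k) := by
  classical
  choose y hy using fun j => hpr (φM (pr (Pi.single j 1)))
  obtain ⟨c, hc⟩ := exists_forall_mem_vanishingBelow (Function.uncurry y)
  let Ψ : (ι → LaurentSeries R) →+ (ι → LaurentSeries R) :=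
    (Fintype.linearCombination _ y).toAddMonoidHom.comp (φ.compLeft _).toAddMonoidHom
  have hΨ : ∀ k ≥ 2 * n + c, ∀ x ∈ vanishingBelowPi R ι k,
      Ψ x ∈ vanishingBelowPi R ι (k + 1 : ℕ) := by
    intro k hk x hx
    refine vanishingBelowPi_antitone ?_ (sum_map_smul_mem_vanishingBelowPi (hφ k)
      (fun j => mem_vanishingBelowPi.2 fun i => hc (j, i)) hx)
    have : 2 * (k + 1 - n) ≤ q * (k + 1 - n) := Nat.mul_le_mul_right _ hq
    push_cast
    omega
  refine ⟨2 * n + c, ?_⟩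
  rintro k hk _ ⟨w, hw, rfl⟩
  obtain ⟨u, hu, rfl⟩ := exists_sub_map_eq_of_contracting
    (vanishingBelowPi_antitone.comp_monotone Nat.mono_cast)
    (fun _ => eq_zero_of_forall_mem_vanishingBelowPi) (fun _ => exists_sub_mem_vanishingBelowPi)
    hΨ hk hw
  refine ⟨pr (-u), ⟨-u, neg_mem hu, rfl⟩, ?_⟩
  have hΨu : pr (Ψ u) = φM (pr u) := LinearMap.map_sum_smul_of_map_single hφM pr hy u
  simp only [AddMonoidHom.sub_apply, AddMonoidHom.id_apply, map_neg, map_sub, hΨu]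
  abel

open Topology

variable [TopologicalSpace (LaurentSeries R)]

theorem hasBasis_nhds_zero_vanishingBelowPi [Finite ι]
    (hbasis : (𝓝 (0 : LaurentSeries R)).HasBasis (fun _ : ℕ => True)
      fun k => (vanishingBelow R k : Set (LaurentSeries R))) :
    (𝓝 (0 : ι → LaurentSeries R)).HasBasis (fun _ : ℕ => True)
      fun k => (vanishingBelowPi R ι k : Set (ι → LaurentSeries R)) := by
  rw [nhds_pi]
  refine hbasis.pi_self.to_hasBasis (fun Ik _ => ⟨Ik.2, trivial, ?_⟩)
    fun k _ => ⟨(Set.univ, k), ⟨Set.finite_univ, trivial⟩, ?_⟩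
  · simp only [vanishingBelowPi, AddSubgroup.coe_pi]
    exact Set.pi_mono' (fun _ _ => subset_rfl) (Set.subset_univ _)
  · simp only [vanishingBelowPi, AddSubgroup.coe_pi, subset_rfl]

theorem isOpenMap_of_image_vanishingBelowPi_subset [IsTopologicalRing (LaurentSeries R)]
    [Finite ι]
    (hbasis : (𝓝 (0 : LaurentSeries R)).HasBasis (fun _ : ℕ => True)
      fun k => (vanishingBelow R k : Set (LaurentSeries R)))
    {M : Type*} [AddCommGroup M] [Module (LaurentSeries R) M] [TopologicalSpace M]
    [IsModuleTopology (LaurentSeries R) M] {pr : (ι → LaurentSeries R) →ₗ[LaurentSeries R] M}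
    (hpr : Function.Surjective pr) {f : M →+ M} {k₀ : ℕ}
    (hf : ∀ k ≥ k₀, pr '' vanishingBelowPi R ι k ⊆ f '' (pr '' vanishingBelowPi R ι k)) :
    IsOpenMap f := by
  have := IsModuleTopology.topologicalAddGroup (LaurentSeries R) M
  have hbasisPi := hasBasis_nhds_zero_vanishingBelowPi (ι := ι) hbasis
  rw [IsTopologicalAddGroup.isOpenMap_iff_nhds_zero]
  intro V hV
  have hpre : pr ⁻¹' (f ⁻¹' V) ∈ 𝓝 0 :=
    (IsModuleTopology.continuous_of_linearMap pr).continuousAt.preimage_mem_nhds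
      (by rwa [map_zero])
  obtain ⟨k, -, hk⟩ := hbasisPi.mem_iff.1 hpre
  set K := max k k₀
  have hW : (vanishingBelowPi R ι K : Set (ι → LaurentSeries R)) ∈ 𝓝 0 :=
    hbasisPi.mem_of_mem trivial
  have hopen : IsOpen (pr '' vanishingBelowPi R ι K) :=
    IsModuleTopology.isOpenMap_of_surjective hpr _ (AddSubgroup.isOpen_of_mem_nhds _ hW)
  refine Filter.mem_of_superset (hopen.mem_nhds ⟨0, zero_mem _, map_zero pr⟩) ?_
  refine (hf K (le_max_right _ _)).trans ?_
  rintro _ ⟨_, ⟨u, hu, rfl⟩, rfl⟩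
  exact hk (vanishingBelowPi_antitone (by simp [K]) hu)

end LaurentSeries

theorem statement11_phi_minus_one_open_general
    (O : Type*) [CommRing O]
    (π : O)
    (q : ℕ) (hq1 : 1 < q)
    (Xπ : PowerSeries O)
    (hXπq : ∃ gq : PowerSeries O, Xπ = PowerSeries.X ^ q + PowerSeries.C π * gq)
    (n : ℕ)
    (R : Type*) [CommRing R] [Algebra O R]
    (hRker : RingHom.ker (algebraMap O R) = Ideal.span {π ^ n})
    [TopologicalSpace (LaurentSeries R)] [IsTopologicalRing (LaurentSeries R)]
    (hbasis : (nhds (0 : LaurentSeries R)).HasBasis (fun _ : ℕ => True)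
      (fun k => {f : LaurentSeries R | ∀ i : ℤ, i < (k : ℤ) → f.coeff i = 0}))
    -- the Frobenius substitution `f(Z) ↦ f([π_L](Z))` on `R((Z))`
    (φA : LaurentSeries R →+* LaurentSeries R)
    (hφA : ∀ f : PowerSeries R,
      φA (HahnSeries.ofPowerSeries ℤ R f) = HahnSeries.ofPowerSeries ℤ R
        (PowerSeries.mk fun k => ∑ m ∈ Finset.range (k + 1),
          PowerSeries.coeff m f *
            PowerSeries.coeff k ((PowerSeries.map (algebraMap O R) Xπ) ^ m)))
    -- the étale `φ`-module `(M, φM)` with its weak topology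
    (M : Type*) [AddCommGroup M] [Module (LaurentSeries R) M]
    [TopologicalSpace M]
    (d : ℕ) (pr : (Fin d → LaurentSeries R) →ₗ[LaurentSeries R] M)
    (hpr : Function.Surjective pr)
    (htopM : (inferInstance : TopologicalSpace M) =
      TopologicalSpace.coinduced pr (inferInstance : TopologicalSpace (Fin d → LaurentSeries R)))
    (φM : M →+ M)
    (hφM : ∀ (a : LaurentSeries R) (m : M), φM (a • m) = φA a • φM m) :
    IsOpenMap (fun m : M => φM m - m)
      ∧ ∀ U : Set M, IsOpen U → ∃ V : Set M, IsOpen V ∧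
          (fun m : M => φM m - m) '' U = V ∩ Set.range (fun m : M => φM m - m) := by
  obtain ⟨g, rfl⟩ := hXπq
  have hπn : algebraMap O R π ^ n = 0 := by
    rw [← map_pow, ← RingHom.mem_ker, hRker]
    exact Ideal.mem_span_singleton_self _
  have hφA_mem : ∀ k : ℕ, ∀ x ∈ LaurentSeries.vanishingBelow R k,
      φA x ∈ LaurentSeries.vanishingBelow R (q * (k + 1 - n) : ℕ) := by
    refine fun k x hx => LaurentSeries.map_mem_vanishingBelow (e := fun m => q * (m + 1 - n)) hφA
      (fun a b hab => Nat.mul_le_mul_left q (by omega)) (fun m => ?_) hx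
    simpa using PowerSeries.X_pow_dvd_pow_X_pow_add_C_mul hπn q m (g.map (algebraMap O R))
  obtain ⟨k₀, hk₀⟩ := LaurentSeries.exists_image_vanishingBelowPi_subset hq1 hφA_mem hφM hpr
  have : IsModuleTopology (LaurentSeries R) M :=
    ⟨htopM.trans (ModuleTopology.eq_coinduced_of_surjective hpr).symm⟩
  have hopen : IsOpenMap (fun m : M => φM m - m) :=
    LaurentSeries.isOpenMap_of_image_vanishingBelowPi_subset hbasis hpr hk₀
  exact ⟨hopen, fun U hU => ⟨_, hopen U hU,
    (Set.inter_eq_self_of_subset_left (Set.image_subset_range _ _)).symm⟩⟩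

/-- Context as in Statement 10: `O = o_L` is the ring of integers of a finite extension of `ℚ_p`
with prime `π` and residue cardinality `q`, `Xπ = [π_L](Z)` a Lubin-Tate series,
`R := o_L/π^n o_L` the discrete quotient ring, `R((Z))` with its weak topology, `φA` the
substitution `f(Z) ↦ f([π_L](Z))` on `R((Z))`, and `(M, φM)` an étale `φ`-module over
`R((Z))`: a finitely generated `R((Z))`-module with its weak topology together with a
`φA`-semilinear map whose linearization is bijective.

Conclusion: the map `φM − 1 : M → M` is an open map for the weak topology; in particular it
is topologically strict: the image of any open set is open in the subspace topology of the
range (equivalently, the induced map from `M/ker(φM − 1)` with the quotient topology onto the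
image with the subspace topology is a homeomorphism). -/
theorem statement11_phi_minus_one_open
    (O : Type*) [CommRing O] [IsDomain O] [IsDiscreteValuationRing O]
    (π : O) (hπ : Irreducible π) [IsAdicComplete (Ideal.span {π}) O]
    (q : ℕ) (hq1 : 1 < q) (hq : Nat.card (O ⧸ Ideal.span {π}) = q)
    (Xπ : PowerSeries O)
    (hXπ0 : PowerSeries.constantCoeff Xπ = 0)
    (hXπ1 : PowerSeries.coeff 1 Xπ = π)
    (hXπq : ∃ gq : PowerSeries O, Xπ = PowerSeries.X ^ q + PowerSeries.C π * gq)
    (n : ℕ) (hn : 1 ≤ n)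
    (R : Type*) [CommRing R] [Algebra O R]
    (hRsurj : Function.Surjective (algebraMap O R))
    (hRker : RingHom.ker (algebraMap O R) = Ideal.span {π ^ n})
    [TopologicalSpace R] [DiscreteTopology R]
    [TopologicalSpace (LaurentSeries R)] [IsTopologicalRing (LaurentSeries R)]
    (hbasis : (nhds (0 : LaurentSeries R)).HasBasis (fun _ : ℕ => True)
      (fun k => {f : LaurentSeries R | ∀ i : ℤ, i < (k : ℤ) → f.coeff i = 0}))
    -- the Frobenius substitution `f(Z) ↦ f([π_L](Z))` on `R((Z))`
    (φA : LaurentSeries R →+* LaurentSeries R)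
    (hφA : ∀ f : PowerSeries R,
      φA (HahnSeries.ofPowerSeries ℤ R f) = HahnSeries.ofPowerSeries ℤ R
        (PowerSeries.mk fun k => ∑ m ∈ Finset.range (k + 1),
          PowerSeries.coeff m f *
            PowerSeries.coeff k ((PowerSeries.map (algebraMap O R) Xπ) ^ m)))
    -- the étale `φ`-module `(M, φM)` with its weak topology
    (M : Type*) [AddCommGroup M] [Module (LaurentSeries R) M]
    [Module.Finite (LaurentSeries R) M] [TopologicalSpace M]
    (d : ℕ) (pr : (Fin d → LaurentSeries R) →ₗ[LaurentSeries R] M)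
    (hpr : Function.Surjective pr)
    (htopM : (inferInstance : TopologicalSpace M) =
      TopologicalSpace.coinduced pr (inferInstance : TopologicalSpace (Fin d → LaurentSeries R)))
    (φM : M →+ M)
    (hφM : ∀ (a : LaurentSeries R) (m : M), φM (a • m) = φA a • φM m)
    (hEtale : Function.Bijective ⇑(frobLinearization φA φM hφM)) :
    IsOpenMap (fun m : M => φM m - m)
      ∧ ∀ U : Set M, IsOpen U → ∃ V : Set M, IsOpen V ∧
          (fun m : M => φM m - m) '' U = V ∩ Set.range (fun m : M => φM m - m) :=
  statement11_phi_minus_one_open_general O π q hq1 Xπ hXπq n R hRker hbasis φA hφA M d pr hpr htopM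
    φM hφM
end

section
/- Let M_0 →^α M →^β M_1 be a sequence of Hausdorff locally compact linear-topological o_L-modules and continuous o_L-linear maps such that im(α) = ker(β) and β is topologically strict with closed image. Then the dual sequence M_1^∨ →^{β^∨} M^∨ →^{α^∨} M_0^∨ is exact, i.e. im(β^∨) = ker(α^∨), where (−)^∨ := Hom_{o_L}^c(−, L/o_L) with the compact-open topology and β^∨(F) := F ∘ β, α^∨(F) := F ∘ α. -/
/-! Strictness of `β` yields an open submodule `S ⊆ M₁` with `S ∩ im β ⊆ β(ker F)`, so `F`
factors through the image of `M` in `M₁ ⧸ S`. Since `o_L` is a Dedekind domain, `L/o_L` is an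
injective `o_L`-module (Baer's criterion, using invertibility of nonzero ideals), so this
factorisation extends to all of `M₁ ⧸ S`; composed with `M₁ → M₁ ⧸ S` it vanishes on the open
submodule `S` and is therefore continuous. -/

/-- The submodule of `C(M, Q)` consisting of the (continuous) `S`-linear maps; its
underlying type, with the subspace topology of the compact-open topology on `C(M, Q)`,
is `Hom_S^c(M, Q)`. -/
def continuousLinearSubmodule (S M Q : Type*) [CommSemiring S]
    [TopologicalSpace M] [AddCommMonoid M] [Module S M]
    [TopologicalSpace Q] [AddCommMonoid Q] [Module S Q]
    [ContinuousAdd Q] [ContinuousConstSMul S Q] : Submodule S C(M, Q) where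
  carrier := {f | IsLinearMap S f}
  add_mem' := fun {f g} hf hg => by
    constructor
    · intro x y
      simp only [ContinuousMap.add_apply]
      rw [hf.map_add, hg.map_add]
      abel
    · intro c x
      simp only [ContinuousMap.add_apply]
      rw [hf.map_smul, hg.map_smul, smul_add]
  zero_mem' := by
    constructor
    · intro x y; simp
    · intro c x; simp
  smul_mem' := fun c f hf => by
    constructor
    · intro x y
      simp only [ContinuousMap.smul_apply]
      rw [hf.map_add, smul_add]
    · intro a x
      simp only [ContinuousMap.smul_apply]
      rw [hf.map_smul, smul_comm]

open Filter Topology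

theorem Module.Baer.exists_comp_eq_of_ker_le {R M N Q : Type*} [Ring R]
    [AddCommGroup M] [Module R M] [AddCommGroup N] [Module R N] [AddCommGroup Q] [Module R Q]
    (hQ : Module.Baer R Q) (ψ : M →ₗ[R] N) (F : M →ₗ[R] Q)
    (hker : LinearMap.ker ψ ≤ LinearMap.ker F) :
    ∃ G : N →ₗ[R] Q, G ∘ₗ ψ = F := by
  obtain ⟨G, hG⟩ := hQ.extension_property ((LinearMap.ker ψ).liftQ ψ le_rfl)
    (LinearMap.ker_eq_bot.mp ((LinearMap.ker ψ).ker_liftQ_eq_bot _ _ le_rfl))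
    ((LinearMap.ker ψ).liftQ F hker)
  refine ⟨G, ?_⟩
  rw [← (LinearMap.ker ψ).liftQ_mkQ ψ le_rfl, ← LinearMap.comp_assoc, hG, Submodule.liftQ_mkQ]

theorem Module.Baer.quotient_range_algebraMap (R K : Type*) [CommRing R] [IsDedekindDomain R]
    [Field K] [Algebra R K] [IsFractionRing R K] :
    Module.Baer R (K ⧸ LinearMap.range (Algebra.linearMap R K)) := by
  intro I f
  rcases eq_or_ne I ⊥ with rfl | hI
  · refine ⟨0, fun x hx => ?_⟩
    obtain rfl : x = 0 := hx
    exact (map_zero f).symm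
  -- `T` is the ideal of those `r` for which `r • f` extends to `R`. It contains `I * I⁻¹ = 1`:
  -- for `a ∈ I`, `b ∈ I⁻¹` and `[d] = f a`, the map `x ↦ [x b d]` extends `(a b) • f`.
  let T : Ideal R := (LinearMap.range (LinearMap.lcomp R _ I.subtype)).comap
    (LinearMap.toSpanSingleton R _ f)
  have hJ : (I : FractionalIdeal (nonZeroDivisors R) K) ≠ 0 := by
    rwa [ne_eq, FractionalIdeal.coeIdeal_eq_zero]
  have hT : (1 : FractionalIdeal (nonZeroDivisors R) K) ≤ T := by
    rw [← mul_inv_cancel₀ hJ, FractionalIdeal.mul_le]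
    intro i hi b hb
    obtain ⟨a, ha, rfl⟩ := (FractionalIdeal.mem_coeIdeal _).mp hi
    have hbI : ∀ x ∈ I, ∃ s : R, algebraMap R K s = b * algebraMap R K x := fun x hx =>
      (FractionalIdeal.mem_one_iff _).mp
        ((FractionalIdeal.mem_inv_iff hJ).mp hb _ (FractionalIdeal.mem_coeIdeal_of_mem _ hx))
    choose s hs using hbI
    obtain ⟨d, hd⟩ := Submodule.mkQ_surjective _ (f ⟨a, ha⟩)
    refine (FractionalIdeal.mem_coeIdeal _).mpr
      ⟨s a ha, ⟨(Submodule.mkQ _).comp (LinearMap.toSpanSingleton R K (b * d)), ?_⟩,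
        by rw [hs, mul_comm]⟩
    refine LinearMap.ext fun ⟨x, hx⟩ => ?_
    have hsx : s x hx • (⟨a, ha⟩ : I) = s a ha • ⟨x, hx⟩ := Subtype.ext <|
      IsFractionRing.injective R K <| by
        simp only [Submodule.coe_smul, smul_eq_mul, map_mul, hs]
        ring
    calc Submodule.mkQ _ (x • (b * d)) = Submodule.mkQ _ (s x hx • d) := by
          rw [Algebra.smul_def, Algebra.smul_def, hs, mul_left_comm, mul_assoc]
      _ = s a ha • f ⟨x, hx⟩ := by rw [map_smul, hd, ← map_smul, hsx, map_smul]
  obtain ⟨t, ⟨g, hg⟩, ht⟩ := (FractionalIdeal.mem_coeIdeal _).mp (FractionalIdeal.one_le.mp hT)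
  obtain rfl : t = 1 := IsFractionRing.injective R K (by rw [ht, map_one])
  refine ⟨g, fun x hx => ?_⟩
  simpa using LinearMap.congr_fun hg ⟨x, hx⟩

theorem LinearMap.continuous_of_isOpen_le_ker {R M Q : Type*} [Ring R]
    [AddCommGroup M] [Module R M] [TopologicalSpace M] [IsTopologicalAddGroup M]
    [AddCommGroup Q] [Module R Q] [TopologicalSpace Q] [DiscreteTopology Q]
    (G : M →ₗ[R] Q) {S : Submodule R M} (hS : IsOpen (S : Set M))
    (hSG : S ≤ LinearMap.ker G) : Continuous G := by
  refine continuous_of_continuousAt_zero G ?_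
  rw [ContinuousAt, nhds_discrete Q, map_zero, tendsto_pure]
  filter_upwards [hS.mem_nhds S.zero_mem] with x hx using hSG hx

theorem isLinearTopology_of_exists_isOpen_submodule (R : Type*) {M : Type*} [Ring R]
    [AddCommGroup M] [Module R M] [TopologicalSpace M] [ContinuousAdd M]
    (h : ∀ U ∈ 𝓝 (0 : M), ∃ S : Submodule R M, IsOpen (S : Set M) ∧ (S : Set M) ⊆ U) :
    IsLinearTopology R M :=
  isLinearTopology_iff_hasBasis_open_submodule.mpr
    ⟨fun U => ⟨h U, fun ⟨S, hS, hSU⟩ => mem_of_superset (hS.mem_nhds S.zero_mem) hSU⟩⟩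

theorem Module.Baer.exists_continuous_comp_eq_of_ker_le {R M M₁ Q : Type*} [Ring R]
    [AddCommGroup M] [Module R M] [TopologicalSpace M]
    [AddCommGroup M₁] [Module R M₁] [TopologicalSpace M₁] [IsTopologicalAddGroup M₁]
    [IsLinearTopology R M₁]
    [AddCommGroup Q] [Module R Q] [TopologicalSpace Q] [DiscreteTopology Q]
    (hQ : Module.Baer R Q) (β : M →ₗ[R] M₁)
    (hstrict : ∀ U : Set M, IsOpen U → ∃ V : Set M₁, IsOpen V ∧ β '' U = V ∩ Set.range β)
    (F : M →ₗ[R] Q) (hF : Continuous F) (hker : LinearMap.ker β ≤ LinearMap.ker F) :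
    ∃ G : M₁ →ₗ[R] Q, Continuous G ∧ G ∘ₗ β = F := by
  obtain ⟨V, hV, hVeq⟩ := hstrict _ ((isOpen_discrete {0}).preimage hF)
  have h0V : (0 : M₁) ∈ V := by
    have h0 : (0 : M₁) ∈ β '' (F ⁻¹' {0}) := ⟨0, map_zero F, map_zero β⟩
    exact (hVeq ▸ h0).1
  obtain ⟨S, hS, hSV⟩ :=
    (IsLinearTopology.hasBasis_open_submodule R).mem_iff.mp (hV.mem_nhds h0V)
  have hkerS : LinearMap.ker (S.mkQ ∘ₗ β) ≤ LinearMap.ker F := by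
    intro m hm
    have hmS : β m ∈ S := (Submodule.Quotient.mk_eq_zero S).mp hm
    obtain ⟨u, hu, hum⟩ : β m ∈ β '' (F ⁻¹' {0}) := by
      rw [hVeq]
      exact ⟨hSV hmS, m, rfl⟩
    have hFmu : F (m - u) = 0 := hker (by rw [LinearMap.mem_ker, map_sub, hum, sub_self])
    rwa [map_sub, show F u = 0 from hu, sub_zero] at hFmu
  obtain ⟨G, hG⟩ := hQ.exists_comp_eq_of_ker_le _ F hkerS
  refine ⟨G ∘ₗ S.mkQ, (G ∘ₗ S.mkQ).continuous_of_isOpen_le_ker hS fun x hx => ?_, hG⟩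
  simp [(Submodule.Quotient.mk_eq_zero S).mpr hx]

theorem statement19_dual_sequence_exact_general
    (p : ℕ) [Fact p.Prime] (L : Type*) [Field L] [Algebra ℚ_[p] L]
    [FiniteDimensional ℚ_[p] L] [Algebra ℤ_[p] L] [IsScalarTower ℤ_[p] ℚ_[p] L]
    (Q : Type*) [AddCommGroup Q] [Module ↥(integralClosure ℤ_[p] L) Q]
    [TopologicalSpace Q] [DiscreteTopology Q] [IsTopologicalAddGroup Q]
    [ContinuousConstSMul ↥(integralClosure ℤ_[p] L) Q]
    (eQ : Q ≃ₗ[↥(integralClosure ℤ_[p] L)]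
      (L ⧸ (LinearMap.range (Algebra.linearMap ↥(integralClosure ℤ_[p] L) L))))
    (M₀ M M₁ : Type*)
    [AddCommGroup M₀] [Module ↥(integralClosure ℤ_[p] L) M₀]
    [TopologicalSpace M] [AddCommGroup M] [Module ↥(integralClosure ℤ_[p] L) M]
    [TopologicalSpace M₁] [AddCommGroup M₁] [Module ↥(integralClosure ℤ_[p] L) M₁]
    [IsTopologicalAddGroup M₁]
    (hlin₁ : ∀ U ∈ nhds (0 : M₁), ∃ S : Submodule ↥(integralClosure ℤ_[p] L) M₁,
      IsOpen (S : Set M₁) ∧ (S : Set M₁) ⊆ U)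
    (α : M₀ →ₗ[↥(integralClosure ℤ_[p] L)] M)
    (β : M →ₗ[↥(integralClosure ℤ_[p] L)] M₁)
    (hexact : Set.range α = {m : M | β m = 0})
    (hstrict : ∀ U : Set M, IsOpen U →
      ∃ V : Set M₁, IsOpen V ∧ β '' U = V ∩ Set.range β) :
    ∀ F : ↥(continuousLinearSubmodule ↥(integralClosure ℤ_[p] L) M Q),
      (∀ m₀ : M₀, F.1 (α m₀) = 0) ↔
        ∃ G : ↥(continuousLinearSubmodule ↥(integralClosure ℤ_[p] L) M₁ Q),
          ∀ m : M, F.1 m = G.1 (β m) := by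
  have : IsFractionRing (integralClosure ℤ_[p] L) L :=
    integralClosure.isFractionRing_of_finite_extension ℚ_[p] L
  have := integralClosure.isDedekindDomain ℤ_[p] ℚ_[p] L
  have := isLinearTopology_of_exists_isOpen_submodule _ hlin₁
  have hQ : Module.Baer _ Q := (Module.Baer.quotient_range_algebraMap _ L).of_equiv eQ.symm
  intro F
  constructor
  · intro hF
    have hker : LinearMap.ker β ≤ LinearMap.ker (IsLinearMap.mk' F.1 F.2) := by
      intro m hm
      obtain ⟨m₀, rfl⟩ : m ∈ Set.range α := hexact ▸ hm
      exact hF m₀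
    obtain ⟨G, hG, hGβ⟩ :=
      hQ.exists_continuous_comp_eq_of_ker_le β hstrict _ F.1.continuous hker
    exact ⟨⟨⟨G, hG⟩, G.isLinear⟩, fun m => (LinearMap.congr_fun hGβ m).symm⟩
  · rintro ⟨G, hG⟩ m₀
    have hβα : β (α m₀) = 0 := (hexact ▸ Set.mem_range_self m₀ :)
    rw [hG, hβα]
    exact G.2.map_zero

/-- `L` is a finite extension of `ℚ_p` with ring of integers `o_L := integralClosure ℤ_[p] L`,
and `Q ≅ L/o_L` is the discrete quotient `o_L`-module.  `M₀ →^α M →^β M₁` is a sequence of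
Hausdorff locally compact linear-topological `o_L`-modules with continuous `o_L`-linear maps
such that `im(α) = ker(β)` and `β` is topologically strict (images of open sets are
relatively open in the range) with closed image.  For a topological `o_L`-module `N`,
`N^∨ := Hom_{o_L}^c(N, L/o_L)` is formalised as `continuousLinearSubmodule o_L N Q`.

Conclusion: the dual sequence `M₁^∨ →^{β^∨} M^∨ →^{α^∨} M₀^∨` (with `β^∨ F = F ∘ β` and
`α^∨ F = F ∘ α`) is exact, i.e. `im(β^∨) = ker(α^∨)`: a functional `F ∈ M^∨` vanishes on the
image of `α` if and only if it factors as `F = G ∘ β` for some `G ∈ M₁^∨`. -/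
theorem statement19_dual_sequence_exact
    (p : ℕ) [Fact p.Prime] (L : Type*) [Field L] [Algebra ℚ_[p] L]
    [FiniteDimensional ℚ_[p] L] [Algebra ℤ_[p] L] [IsScalarTower ℤ_[p] ℚ_[p] L]
    (Q : Type*) [AddCommGroup Q] [Module ↥(integralClosure ℤ_[p] L) Q]
    [TopologicalSpace Q] [DiscreteTopology Q] [IsTopologicalAddGroup Q]
    [ContinuousConstSMul ↥(integralClosure ℤ_[p] L) Q]
    (eQ : Q ≃ₗ[↥(integralClosure ℤ_[p] L)]
      (L ⧸ (LinearMap.range (Algebra.linearMap ↥(integralClosure ℤ_[p] L) L))))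
    (M₀ M M₁ : Type*)
    [TopologicalSpace M₀] [AddCommGroup M₀] [Module ↥(integralClosure ℤ_[p] L) M₀]
    [IsTopologicalAddGroup M₀] [T2Space M₀] [LocallyCompactSpace M₀]
    (hlin₀ : ∀ U ∈ nhds (0 : M₀), ∃ S : Submodule ↥(integralClosure ℤ_[p] L) M₀,
      IsOpen (S : Set M₀) ∧ (S : Set M₀) ⊆ U)
    [TopologicalSpace M] [AddCommGroup M] [Module ↥(integralClosure ℤ_[p] L) M]
    [IsTopologicalAddGroup M] [T2Space M] [LocallyCompactSpace M]
    (hlin : ∀ U ∈ nhds (0 : M), ∃ S : Submodule ↥(integralClosure ℤ_[p] L) M,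
      IsOpen (S : Set M) ∧ (S : Set M) ⊆ U)
    [TopologicalSpace M₁] [AddCommGroup M₁] [Module ↥(integralClosure ℤ_[p] L) M₁]
    [IsTopologicalAddGroup M₁] [T2Space M₁] [LocallyCompactSpace M₁]
    (hlin₁ : ∀ U ∈ nhds (0 : M₁), ∃ S : Submodule ↥(integralClosure ℤ_[p] L) M₁,
      IsOpen (S : Set M₁) ∧ (S : Set M₁) ⊆ U)
    (α : M₀ →ₗ[↥(integralClosure ℤ_[p] L)] M) (hα : Continuous α)
    (β : M →ₗ[↥(integralClosure ℤ_[p] L)] M₁) (hβ : Continuous β)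
    (hexact : Set.range α = {m : M | β m = 0})
    (hclosed : IsClosed (Set.range β))
    (hstrict : ∀ U : Set M, IsOpen U →
      ∃ V : Set M₁, IsOpen V ∧ β '' U = V ∩ Set.range β) :
    ∀ F : ↥(continuousLinearSubmodule ↥(integralClosure ℤ_[p] L) M Q),
      (∀ m₀ : M₀, F.1 (α m₀) = 0) ↔
        ∃ G : ↥(continuousLinearSubmodule ↥(integralClosure ℤ_[p] L) M₁ Q),
          ∀ m : M, F.1 m = G.1 (β m) :=
  statement19_dual_sequence_exact_general p L Q eQ M₀ M M₁ hlin₁ α β hexact hstrict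
end
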